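/- Let Γ be a group and B ⊆ Γ a finite subset with |B·B⁻¹| < (3/2)|B|. Then both B·B⁻¹ and B⁻¹·B are subgroups of Γ. -/

import Mathlib

/-!
For `k = x⁻¹y` with `x, y ∈ B`, the set `B⁻¹ ∩ kB⁻¹` is a translate of `xB⁻¹ ∩ yB⁻¹`; both
`xB⁻¹` and `yB⁻¹` lie in `BB⁻¹`, which has fewer than `3|B|/2` elements, so it has more than
`|B|/2` elements. Hence for `g, k ∈ B⁻¹B` the sets `B⁻¹ ∩ g⁻¹B⁻¹` and `B⁻¹ ∩ kB⁻¹` meet, which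
gives `gk ∈ B⁻¹B`, and `B⁻¹B` is a group; double counting the `|B|²` pairs gives
`|B⁻¹B| < 2|B|`. Finally `ac⁻¹·de⁻¹ = g⁻¹k` with `g = a⁻¹` and `k = c⁻¹de⁻¹`; the translates
`gB` and `kB` lie in the group `B⁻¹B` of fewer than `2|B|` elements, so they meet, which puts the
product in `BB⁻¹`.
-/

open Pointwise Finset

section

variable {Γ : Type*} [Group Γ] [DecidableEq Γ]

namespace Finset

lemma inv_mul_mem_mul_inv_iff {A : Finset Γ} {g k : Γ} :
    g⁻¹ * k ∈ A * A⁻¹ ↔ (g • A ∩ k • A).Nonempty := by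
  rw [← convolution_pos, ← card_smul_inter_smul, card_pos]

lemma inv_mul_mem_mul_inv_of_smul_subset {A U : Finset Γ} {g k : Γ} (hg : g • A ⊆ U)
    (hk : k • A ⊆ U) (hU : #U < 2 * #A) : g⁻¹ * k ∈ A * A⁻¹ :=
  inv_mul_mem_mul_inv_iff.2 <| inter_nonempty_of_card_lt_card_add_card hg hk <| by
    rwa [card_smul_finset, card_smul_finset, ← two_mul]

lemma sum_convolution (A C : Finset Γ) : ∑ x ∈ A * C, A.convolution C x = #A * #C := by
  rw [← card_product, card_eq_sum_card_fiberwise (f := fun p ↦ p.1 * p.2)]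
  · rfl
  · intro p hp
    exact mul_mem_mul (mem_product.1 hp).1 (mem_product.1 hp).2

lemma two_mul_card_le_convolution_add_card_mul {A C : Finset Γ} {x y : Γ} (hx : x ∈ C)
    (hy : y ∈ C) : 2 * #A ≤ A.convolution A⁻¹ (x⁻¹ * y) + #(C * A) := by
  rw [← card_smul_inter_smul]
  calc 2 * #A = #(x • A ∩ y • A) + #(x • A ∪ y • A) := by
        rw [card_inter_add_card_union, card_smul_finset, card_smul_finset, two_mul]
    _ ≤ #(x • A ∩ y • A) + #(C * A) := by
        gcongr
        exact union_subset (smul_finset_subset_mul hx) (smul_finset_subset_mul hy)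

end Finset

lemma Subgroup.exists_coe_eq_of_mul_mem {S : Finset Γ} (hne : S.Nonempty) (hinv : S⁻¹ = S)
    (hmul : ∀ x ∈ S, ∀ y ∈ S, x * y ∈ S) : ∃ H : Subgroup Γ, (H : Set Γ) = S :=
  ⟨Subgroup.ofDiv S hne fun x hx _ hy ↦ hmul x hx _ (hinv ▸ inv_mem_inv hy), rfl⟩

variable {B : Finset Γ} (h : 2 * #(B * B⁻¹) < 3 * #B)
include h

lemma card_lt_two_mul_convolution_of_mem_inv_mul {k : Γ} (hk : k ∈ B⁻¹ * B) :
    #B < 2 * B⁻¹.convolution B k := by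
  obtain ⟨_, hxinv, y, hy, rfl⟩ := mem_mul.1 hk
  obtain ⟨x, hx, rfl⟩ := mem_inv.1 hxinv
  have := two_mul_card_le_convolution_add_card_mul (A := B⁻¹) hx hy
  rw [card_inv, inv_inv] at this
  omega

lemma mul_mem_inv_mul {g k : Γ} (hg : g ∈ B⁻¹ * B) (hk : k ∈ B⁻¹ * B) : g * k ∈ B⁻¹ * B := by
  have hginv : g⁻¹ ∈ B⁻¹ * B := by simpa [mul_inv_rev] using inv_mem_inv hg
  have hlarge : ∀ x ∈ B⁻¹ * B, #B < 2 * #(B⁻¹ ∩ x • B⁻¹) := fun x hx ↦ by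
    simpa only [card_inter_smul_inv] using card_lt_two_mul_convolution_of_mem_inv_mul h hx
  have hmeet : (B⁻¹ ∩ g⁻¹ • B⁻¹ ∩ (B⁻¹ ∩ k • B⁻¹)).Nonempty :=
    inter_nonempty_of_card_lt_card_add_card inter_subset_left inter_subset_left <| by
      have := hlarge _ hginv
      have := hlarge _ hk
      rw [card_inv]
      omega
  simpa using inv_mul_mem_mul_inv_iff.2 <| hmeet.mono <| inter_subset_inter inter_subset_right
    inter_subset_right

lemma nonempty_of_two_mul_card_mul_inv_lt : B.Nonempty := by
  rw [← card_pos]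
  omega

lemma exists_subgroup_coe_eq_inv_mul : ∃ K : Subgroup Γ, (K : Set Γ) = ↑(B⁻¹ * B) :=
  Subgroup.exists_coe_eq_of_mul_mem
    ((nonempty_of_two_mul_card_mul_inv_lt h).inv.mul (nonempty_of_two_mul_card_mul_inv_lt h))
    (by simp [mul_inv_rev]) fun _ hg _ hk ↦ mul_mem_inv_mul h hg hk

lemma card_inv_mul_lt_two_mul_card : #(B⁻¹ * B) < 2 * #B := by
  have hcount : #(B⁻¹ * B) * (#B + 1) ≤ 2 * (#B * #B) :=
    calc #(B⁻¹ * B) * (#B + 1) = ∑ _k ∈ B⁻¹ * B, (#B + 1) := by rw [sum_const, smul_eq_mul]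
      _ ≤ ∑ k ∈ B⁻¹ * B, 2 * B⁻¹.convolution B k :=
        sum_le_sum fun k hk ↦ card_lt_two_mul_convolution_of_mem_inv_mul h hk
      _ = 2 * (#B * #B) := by rw [← mul_sum, sum_convolution, card_inv]
  nlinarith [(nonempty_of_two_mul_card_mul_inv_lt h).card_pos]

lemma mul_mem_mul_inv {x y : Γ} (hx : x ∈ B * B⁻¹) (hy : y ∈ B * B⁻¹) : x * y ∈ B * B⁻¹ := by
  obtain ⟨a, ha, _, hcinv, rfl⟩ := mem_mul.1 hx
  obtain ⟨c, hc, rfl⟩ := mem_inv.1 hcinv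
  obtain ⟨d, hd, _, heinv, rfl⟩ := mem_mul.1 hy
  obtain ⟨e, he, rfl⟩ := mem_inv.1 heinv
  have hk : (c⁻¹ * d * e⁻¹) • B ⊆ B⁻¹ * B := by
    intro z hz
    obtain ⟨b, hb, rfl⟩ := mem_smul_finset.1 hz
    rw [smul_eq_mul, mul_assoc]
    exact mul_mem_inv_mul h (mul_mem_mul (inv_mem_inv hc) hd) (mul_mem_mul (inv_mem_inv he) hb)
  simpa [mul_assoc] using inv_mul_mem_mul_inv_of_smul_subset
    (smul_finset_subset_mul (inv_mem_inv ha)) hk (card_inv_mul_lt_two_mul_card h)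

lemma exists_subgroup_coe_eq_mul_inv : ∃ H : Subgroup Γ, (H : Set Γ) = ↑(B * B⁻¹) :=
  Subgroup.exists_coe_eq_of_mul_mem
    ((nonempty_of_two_mul_card_mul_inv_lt h).mul (nonempty_of_two_mul_card_mul_inv_lt h).inv)
    (by simp [mul_inv_rev]) fun _ hx _ hy ↦ mul_mem_mul_inv h hx hy

end

theorem freiman_three_halves {Γ : Type*} [Group Γ] [DecidableEq Γ]
    (B : Finset Γ) (h : 2 * (B * B⁻¹).card < 3 * B.card) :
    (∃ H : Subgroup Γ, ((B * B⁻¹ : Finset Γ) : Set Γ) = (H : Set Γ)) ∧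
    (∃ K : Subgroup Γ, ((B⁻¹ * B : Finset Γ) : Set Γ) = (K : Set Γ)) := by
  obtain ⟨H, hH⟩ := exists_subgroup_coe_eq_mul_inv h
  obtain ⟨K, hK⟩ := exists_subgroup_coe_eq_inv_mul h
  exact ⟨⟨H, hH.symm⟩, ⟨K, hK.symm⟩⟩
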